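/- Let G ~ G(n, p_n) with p_n = n^{-α} for fixed 2/3 < α < 1, and let β = (α + 2/3)/2. Then with probability tending to 1 as n → ∞, there exists an integer k ≤ n^{1-β} such that at least n^β/2 vertices v have N₁(v) equal to a star of degree exactly k (i.e., v has degree k and no two neighbors of v are adjacent). -/

import Mathlib

open MeasureTheory ProbabilityTheory
open scoped ENNReal

/-- The Erdős–Rényi measure `G(n, p)`: each potential edge (unordered pair of vertices)
is present independently with probability `p`. -/
noncomputable def erMeasure (n : ℕ) (p : ℝ≥0∞) : Measure (Sym2 (Fin n) → Bool) :=
  Measure.pi fun _ => (PMF.bernoulli (min p 1).toNNReal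
    (by simpa using ENNReal.toNNReal_mono ENNReal.one_ne_top (min_le_right p 1))).toMeasure

/-- The simple graph determined by an edge-indicator configuration `ω`. -/
def graphOf (n : ℕ) (ω : Sym2 (Fin n) → Bool) : SimpleGraph (Fin n) where
  Adj x y := x ≠ y ∧ ω s(x, y) = true
  symm := by
    refine ⟨?_⟩
    intro x y h
    exact ⟨h.1.symm, by rw [Sym2.eq_swap]; exact h.2⟩
  loopless := by refine ⟨?_⟩; intro x h; exact h.1 rfl

instance (n : ℕ) (ω : Sym2 (Fin n) → Bool) : DecidableRel (graphOf n ω).Adj :=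
  fun x y => inferInstanceAs (Decidable (x ≠ y ∧ ω s(x, y) = true))

/-- `N₁(v)` is a star of degree `k`: `v` has degree `k` and no two neighbors of `v`
are adjacent. -/
def isStarOfDegree (n : ℕ) (ω : Sym2 (Fin n) → Bool) (v : Fin n) (k : ℕ) : Prop :=
  (graphOf n ω).degree v = k ∧
    ∀ a b : Fin n, (graphOf n ω).Adj v a → (graphOf n ω).Adj v b →
      ¬ (graphOf n ω).Adj a b

/-!
First moment method, with `D = ⌊n^{1-β}⌋` and `T = ⌈n^{1-δ}⌉` where `δ = (α - 2/3)/4`.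
In `G(n, p)` the expected number of ordered adjacent pairs is at most `n²p = n^{2-α}` and that of
ordered triangles at most `n³p³ = n^{3-3α}`. Since `β + δ - α = -δ` and `2 - 3α + δ < -δ` (this is
where `α > 2/3` enters), Markov's inequality shows that with probability at least `1 - 2n^{-δ}`
fewer than `T` vertices have degree above `D` and fewer than `T` vertices lie on a triangle.
Every other vertex is the centre of a star of degree at most `D`, and by pigeonhole some degree
`k ≤ D` is shared by `(n - 2T)/(D + 1) ≥ n^β/2` of them.
-/

open Finset Filter Topology

namespace SimpleGraph

variable {V : Type*} [Fintype V] (G : SimpleGraph V) [DecidableRel G.Adj]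

def orderedTriangles : Finset (V × V × V) :=
  {t | G.Adj t.1 t.2.1 ∧ G.Adj t.1 t.2.2 ∧ G.Adj t.2.1 t.2.2}

lemma sum_degree_eq_card_adj : ∑ v, G.degree v = #{e : V × V | G.Adj e.1 e.2} := by
  simp only [card_filter, Fintype.sum_prod_type, ← card_neighborFinset_eq_degree,
    neighborFinset_eq_filter]

lemma succ_mul_ncard_lt_degree_le_card_adj (D : ℕ) :
    (D + 1) * {v | D < G.degree v}.ncard ≤ #{e : V × V | G.Adj e.1 e.2} := by
  rw [← sum_degree_eq_card_adj, Set.ncard_eq_toFinset_card', Set.toFinset_ofPred, mul_comm,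
    ← smul_eq_mul]
  calc #{v | D < G.degree v} • (D + 1) ≤ ∑ v ∈ {v | D < G.degree v}, G.degree v :=
        card_nsmul_le_sum _ _ _ fun v hv => (mem_filter.mp hv).2
    _ ≤ ∑ v, G.degree v := sum_le_univ_sum_of_nonneg fun _ => Nat.zero_le _

lemma ncard_not_isIndepSet_neighborSet_le :
    {v | ¬ G.IsIndepSet (G.neighborSet v)}.ncard ≤ #G.orderedTriangles := by
  classical
  calc {v | ¬ G.IsIndepSet (G.neighborSet v)}.ncard
      ≤ (G.orderedTriangles.image Prod.fst : Set V).ncard := by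
        refine Set.ncard_le_ncard (fun v hv => ?_) (Set.toFinite _)
        simp only [IsIndepSet, Set.Pairwise, not_forall, not_not] at hv
        obtain ⟨a, ha, b, hb, -, hab⟩ := hv
        exact mem_image.mpr ⟨(v, a, b), by simp_all [orderedTriangles], rfl⟩
    _ ≤ #G.orderedTriangles := by rw [Set.ncard_coe_finset]; exact card_image_le

lemma exists_le_ncard_degree_eq (s : Set V) (D m : ℕ) (hs : ∀ v ∈ s, G.degree v ≤ D)
    (hm : (D + 1) * m ≤ s.ncard) : ∃ k ≤ D, m ≤ {v ∈ s | G.degree v = k}.ncard := by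
  classical
  obtain ⟨k, hk, hfiber⟩ := exists_le_card_fiber_of_mul_le_card_of_maps_to
    (s := s.toFinset) (t := range (D + 1)) (f := fun v => G.degree v)
    (fun v hv => mem_range.mpr (Nat.lt_succ_of_le (hs v (Set.mem_toFinset.mp hv))))
    nonempty_range_add_one (by rwa [card_range, ← Set.ncard_eq_toFinset_card'])
  refine ⟨k, Nat.lt_succ_iff.mp (mem_range.mp hk), hfiber.trans_eq ?_⟩
  rw [← Set.ncard_coe_finset]
  congr 1
  ext v
  simp

theorem exists_le_ncard_degree_eq_isIndepSet_neighborSet (D T m : ℕ)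
    (hadj : #{e : V × V | G.Adj e.1 e.2} < (D + 1) * T) (htri : #G.orderedTriangles < T)
    (hm : (D + 1) * m + 2 * T ≤ Fintype.card V) :
    ∃ k ≤ D, m ≤ {v | G.degree v = k ∧ G.IsIndepSet (G.neighborSet v)}.ncard := by
  set s := {v | G.degree v ≤ D ∧ G.IsIndepSet (G.neighborSet v)}
  have hhigh : {v | D < G.degree v}.ncard < T :=
    lt_of_mul_lt_mul_left ((G.succ_mul_ncard_lt_degree_le_card_adj D).trans_lt hadj) (Nat.zero_le _)
  have hdep := (G.ncard_not_isIndepSet_neighborSet_le).trans_lt htri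
  have hcompl : sᶜ.ncard < 2 * T := by
    have hsub : sᶜ ⊆ {v | D < G.degree v} ∪ {v | ¬ G.IsIndepSet (G.neighborSet v)} := by
      intro v hv
      simp only [s, Set.mem_compl_iff, Set.mem_ofPred_eq, not_and_or, not_le] at hv
      exact hv
    have := (Set.ncard_le_ncard hsub (Set.toFinite _)).trans (Set.ncard_union_le _ _)
    omega
  have hs : s.ncard + sᶜ.ncard = Fintype.card V := by
    rw [Set.ncard_add_ncard_compl, Nat.card_eq_fintype_card]
  obtain ⟨k, hk, hfiber⟩ := G.exists_le_ncard_degree_eq s D m (fun v hv => hv.1) (by omega)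
  refine ⟨k, hk, hfiber.trans (Set.ncard_le_ncard (fun v hv => ?_) (Set.toFinite _))⟩
  exact ⟨hv.2, hv.1.2⟩

end SimpleGraph

lemma isStarOfDegree_iff {n : ℕ} {ω : Sym2 (Fin n) → Bool} {v : Fin n} {k : ℕ} :
    isStarOfDegree n ω v k ↔
      (graphOf n ω).degree v = k ∧ (graphOf n ω).IsIndepSet ((graphOf n ω).neighborSet v) :=
  and_congr_right' ⟨fun h a ha b hb _ => h a b ha hb,
    fun h a b ha hb => if hab : a = b then hab ▸ (graphOf n ω).loopless.irrefl a
      else h ha hb hab⟩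

lemma exists_le_ncard_isStarOfDegree {n : ℕ} (ω : Sym2 (Fin n) → Bool) (D T m : ℕ)
    (hadj : #{e : Fin n × Fin n | (graphOf n ω).Adj e.1 e.2} < (D + 1) * T)
    (htri : #(graphOf n ω).orderedTriangles < T) (hm : (D + 1) * m + 2 * T ≤ n) :
    ∃ k ≤ D, m ≤ {v | isStarOfDegree n ω v k}.ncard := by
  simp only [isStarOfDegree_iff]
  exact (graphOf n ω).exists_le_ncard_degree_eq_isIndepSet_neighborSet D T m hadj htri
    (by simpa using hm)

section Markov

variable {Ω : Type*} [MeasurableSpace Ω] [DiscreteMeasurableSpace Ω] (μ : Measure Ω)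

lemma lintegral_card_filter {ι : Type*} (s : Finset ι) (P : Ω → ι → Prop)
    [∀ ω i, Decidable (P ω i)] :
    ∫⁻ ω, (#{i ∈ s | P ω i} : ℝ≥0∞) ∂μ = ∑ i ∈ s, μ {ω | P ω i} := by
  simp only [card_filter, Nat.cast_sum, Nat.cast_ite, Nat.cast_one, Nat.cast_zero]
  rw [lintegral_finsetSum _ fun _ _ => Measurable.of_discrete]
  refine sum_congr rfl fun i _ => ?_
  rw [← lintegral_indicator_one MeasurableSet.of_discrete]
  simp only [Set.indicator_apply, Set.mem_ofPred_eq, Pi.one_apply]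

lemma meas_ge_le_ofReal_rpow {f : Ω → ℕ} {c : ℕ} {x a b e : ℝ} (hx : 1 ≤ x)
    (hf : ∫⁻ ω, (f ω : ℝ≥0∞) ∂μ ≤ ENNReal.ofReal (x ^ a)) (hc : x ^ b ≤ c) (he : a - b ≤ e) :
    μ {ω | c ≤ f ω} ≤ ENNReal.ofReal (x ^ e) := by
  have hx0 : 0 < x := one_pos.trans_le hx
  have hc0 : (c : ℝ≥0∞) ≠ 0 := by
    exact_mod_cast (Nat.cast_pos.mp ((Real.rpow_pos_of_pos hx0 b).trans_le hc)).ne'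
  calc μ {ω | c ≤ f ω} = μ {ω | (c : ℝ≥0∞) ≤ f ω} := by simp only [Nat.cast_le]
    _ ≤ (∫⁻ ω, (f ω : ℝ≥0∞) ∂μ) / c :=
        meas_ge_le_lintegral_div Measurable.of_discrete.aemeasurable hc0 (by simp)
    _ ≤ ENNReal.ofReal (x ^ a) / ENNReal.ofReal (x ^ b) := by
        gcongr
        rw [← ENNReal.ofReal_natCast]
        exact ENNReal.ofReal_le_ofReal hc
    _ = ENNReal.ofReal (x ^ (a - b)) := by
        rw [← ENNReal.ofReal_div_of_pos (by positivity), Real.rpow_sub hx0]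
    _ ≤ ENNReal.ofReal (x ^ e) :=
        ENNReal.ofReal_le_ofReal (Real.rpow_le_rpow_of_exponent_le hx he)

end Markov

lemma tendsto_toReal_measure_of_compl_le {Ω : ℕ → Type*} [∀ n, MeasurableSpace (Ω n)]
    {μ : ∀ n, Measure (Ω n)} [∀ n, IsProbabilityMeasure (μ n)] {s : ∀ n, Set (Ω n)}
    (hs : ∀ n, MeasurableSet (s n)) {u : ℕ → ℝ≥0∞} (hu : Tendsto u atTop (𝓝 0))
    (hsu : ∀ᶠ n in atTop, μ n (s n)ᶜ ≤ u n) :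
    Tendsto (fun n => (μ n (s n)).toReal) atTop (𝓝 1) := by
  have hcompl : Tendsto (fun n => μ n (s n)ᶜ) atTop (𝓝 0) :=
    tendsto_of_tendsto_of_tendsto_of_le_of_le' tendsto_const_nhds hu
      (Eventually.of_forall fun _ => bot_le) hsu
  have hreal := (ENNReal.tendsto_toReal ENNReal.zero_ne_top).comp hcompl
  have hcompl_real : ∀ n, (μ n (s n)).toReal = 1 - (μ n (s n)ᶜ).toReal := fun n => by
    rw [← measureReal_def, ← measureReal_def, probReal_compl_eq_one_sub (hs n), sub_sub_cancel]
  simp_rw [hcompl_real]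
  simpa using tendsto_const_nhds.sub hreal

instance (n : ℕ) (p : ℝ≥0∞) : IsProbabilityMeasure (erMeasure n p) := by
  unfold erMeasure; infer_instance

lemma erMeasure_forall_mem_eq_true (n : ℕ) (p : ℝ≥0∞) (S : Finset (Sym2 (Fin n))) :
    erMeasure n p {ω | ∀ e ∈ S, ω e = true} = min p 1 ^ #S := by
  change erMeasure n p ((S : Set (Sym2 (Fin n))).pi fun _ => {true}) = _
  rw [erMeasure, Measure.pi_pi_finset, prod_const]
  congr 1
  rw [PMF.toMeasure_apply_singleton _ _ (measurableSet_singleton _)]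
  exact ENNReal.coe_toNNReal (min_lt_of_right_lt ENNReal.one_lt_top).ne

lemma erMeasure_adj_le (n : ℕ) (p : ℝ≥0∞) (v u : Fin n) :
    erMeasure n p {ω | (graphOf n ω).Adj v u} ≤ min p 1 :=
  calc erMeasure n p {ω | (graphOf n ω).Adj v u}
      ≤ erMeasure n p {ω | ∀ e ∈ ({s(v, u)} : Finset _), ω e = true} :=
        measure_mono fun ω h => by simpa using h.2
    _ = min p 1 := by rw [erMeasure_forall_mem_eq_true, card_singleton, pow_one]

lemma erMeasure_triangle_le (n : ℕ) (p : ℝ≥0∞) (v b c : Fin n) :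
    erMeasure n p {ω | (graphOf n ω).Adj v b ∧ (graphOf n ω).Adj v c ∧ (graphOf n ω).Adj b c}
      ≤ min p 1 ^ 3 := by
  by_cases hdistinct : v ≠ b ∧ v ≠ c ∧ b ≠ c
  · obtain ⟨hvb, hvc, hbc⟩ := hdistinct
    have hcard : #({s(v, b), s(v, c), s(b, c)} : Finset (Sym2 (Fin n))) = 3 := by
      rw [card_insert_of_notMem, card_pair] <;> simp [*, Ne.symm hvb]
    calc _ ≤ erMeasure n p {ω | ∀ e ∈ ({s(v, b), s(v, c), s(b, c)} : Finset _), ω e = true} :=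
          measure_mono fun ω h => by simp_all [graphOf]
      _ = min p 1 ^ 3 := by rw [erMeasure_forall_mem_eq_true, hcard]
  · have hempty : {ω | (graphOf n ω).Adj v b ∧ (graphOf n ω).Adj v c ∧
        (graphOf n ω).Adj b c} = ∅ :=
      Set.eq_empty_of_forall_notMem fun ω h => hdistinct ⟨h.1.ne, h.2.1.ne, h.2.2.ne⟩
    simp [hempty]

lemma lintegral_card_adj_le (n : ℕ) (p : ℝ≥0∞) :
    ∫⁻ ω, (#{e : Fin n × Fin n | (graphOf n ω).Adj e.1 e.2} : ℝ≥0∞) ∂erMeasure n p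
      ≤ n ^ 2 * min p 1 := by
  rw [lintegral_card_filter]
  calc _ ≤ ∑ _e : Fin n × Fin n, min p 1 := sum_le_sum fun e _ => erMeasure_adj_le n p e.1 e.2
    _ = n ^ 2 * min p 1 := by simp [sq]

lemma lintegral_card_orderedTriangles_le (n : ℕ) (p : ℝ≥0∞) :
    ∫⁻ ω, (#(graphOf n ω).orderedTriangles : ℝ≥0∞) ∂erMeasure n p ≤ n ^ 3 * min p 1 ^ 3 := by
  unfold SimpleGraph.orderedTriangles
  rw [lintegral_card_filter]
  calc _ ≤ ∑ _t : Fin n × Fin n × Fin n, min p 1 ^ 3 :=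
        sum_le_sum fun t _ => erMeasure_triangle_le n p t.1 t.2.1 t.2.2
    _ = n ^ 3 * min p 1 ^ 3 := by simp [pow_succ, mul_assoc]

lemma natCast_pow_mul_min_ofReal_rpow_pow_le {n : ℕ} (hn : 0 < n) (k j : ℕ) (α : ℝ) :
    (n : ℝ≥0∞) ^ k * min (ENNReal.ofReal ((n : ℝ) ^ (-α))) 1 ^ j
      ≤ ENNReal.ofReal ((n : ℝ) ^ (k - j * α)) := by
  have hn' : (0 : ℝ) < n := Nat.cast_pos.mpr hn
  calc (n : ℝ≥0∞) ^ k * min (ENNReal.ofReal ((n : ℝ) ^ (-α))) 1 ^ j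
      ≤ (n : ℝ≥0∞) ^ k * ENNReal.ofReal ((n : ℝ) ^ (-α)) ^ j := by gcongr; exact min_le_left _ _
    _ = ENNReal.ofReal ((n : ℝ) ^ (k : ℝ) * ((n : ℝ) ^ (-α)) ^ (j : ℝ)) := by
        rw [ENNReal.ofReal_mul (by positivity), Real.rpow_natCast, Real.rpow_natCast,
          ENNReal.ofReal_pow hn'.le, ENNReal.ofReal_pow (by positivity), ENNReal.ofReal_natCast]
    _ = ENNReal.ofReal ((n : ℝ) ^ (k - j * α)) := by
        rw [← Real.rpow_mul hn'.le, ← Real.rpow_add hn']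
        ring_nf

lemma erMeasure_rpow_card_adj_ge_le {n : ℕ} (hn : 0 < n) {α b γ : ℝ} {c : ℕ}
    (hc : (n : ℝ) ^ b ≤ c) (hγ : 2 - α - b ≤ γ) :
    erMeasure n (ENNReal.ofReal ((n : ℝ) ^ (-α)))
        {ω | c ≤ #{e : Fin n × Fin n | (graphOf n ω).Adj e.1 e.2}}
      ≤ ENNReal.ofReal ((n : ℝ) ^ γ) :=
  meas_ge_le_ofReal_rpow _ (by exact_mod_cast hn) ((lintegral_card_adj_le n _).trans
    (by simpa using natCast_pow_mul_min_ofReal_rpow_pow_le hn 2 1 α)) hc hγ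

lemma erMeasure_rpow_card_orderedTriangles_ge_le {n : ℕ} (hn : 0 < n) {α b γ : ℝ} {c : ℕ}
    (hc : (n : ℝ) ^ b ≤ c) (hγ : 3 - 3 * α - b ≤ γ) :
    erMeasure n (ENNReal.ofReal ((n : ℝ) ^ (-α))) {ω | c ≤ #(graphOf n ω).orderedTriangles}
      ≤ ENNReal.ofReal ((n : ℝ) ^ γ) :=
  meas_ge_le_ofReal_rpow _ (by exact_mod_cast hn) ((lintegral_card_orderedTriangles_le n _).trans
    (by simpa using natCast_pow_mul_min_ofReal_rpow_pow_le hn 3 3 α)) hc hγ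

lemma eventually_rpow_le_mul {c : ℝ} (hc : c < 1) {ε : ℝ} (hε : 0 < ε) :
    ∀ᶠ n : ℕ in atTop, (n : ℝ) ^ c ≤ ε * n := by
  have h0 : Tendsto (fun n : ℕ => (n : ℝ) ^ (c - 1)) atTop (𝓝 0) := by
    simpa [Function.comp_def, neg_sub] using
      (tendsto_rpow_neg_atTop (sub_pos.mpr hc)).comp tendsto_natCast_atTop_atTop
  filter_upwards [h0.eventually_lt_const hε, eventually_gt_atTop 0] with n hn hn0
  calc (n : ℝ) ^ c = (n : ℝ) ^ (c - 1) * n := by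
        rw [Real.rpow_sub_one (by positivity)]; field_simp
    _ ≤ ε * n := by gcongr

lemma eventually_floor_succ_mul_ceil_add_le {β δ : ℝ} (hβ0 : 0 < β) (hβ1 : β < 1) (hδ : 0 < δ) :
    ∀ᶠ n : ℕ in atTop,
      (⌊(n : ℝ) ^ (1 - β)⌋₊ + 1) * ⌈(n : ℝ) ^ β / 2⌉₊ + 2 * ⌈(n : ℝ) ^ (1 - δ)⌉₊ ≤ n := by
  filter_upwards [eventually_rpow_le_mul (c := 1 - β) (by linarith) (ε := 1 / 8) (by norm_num),
    eventually_rpow_le_mul hβ1 (ε := 1 / 8) (by norm_num),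
    eventually_rpow_le_mul (c := 1 - δ) (by linarith) (ε := 1 / 16) (by norm_num),
    eventually_ge_atTop 24] with n hx hy hz hn
  have hn' : (24 : ℝ) ≤ n := by exact_mod_cast hn
  have hxy : (n : ℝ) ^ (1 - β) * (n : ℝ) ^ β = n := by
    rw [← Real.rpow_add (by positivity)]; norm_num
  have hD := Nat.floor_le (Real.rpow_nonneg n.cast_nonneg (1 - β))
  have hm := Nat.ceil_lt_add_one (by positivity : 0 ≤ (n : ℝ) ^ β / 2)
  have hT := Nat.ceil_lt_add_one (by positivity : 0 ≤ (n : ℝ) ^ (1 - δ))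
  have hprod := mul_le_mul (add_le_add_right hD 1) hm.le (by positivity) (by positivity)
  rw [← Nat.cast_le (α := ℝ)]
  push_cast
  linarith

/-- In `G(n, n^{-α})` with `2/3 < α < 1` and `β = (α + 2/3)/2`, with probability tending
to `1` as `n → ∞`, there exists `k ≤ n^{1-β}` such that at least `n^β/2` vertices `v` have
`N₁(v)` equal to a star of degree exactly `k`. -/
theorem many_stars_of_same_degree (α β : ℝ) (hα0 : 2 / 3 < α) (hα1 : α < 1)
    (hβ : β = (α + 2 / 3) / 2) :
    Filter.Tendsto
      (fun n : ℕ =>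
        (erMeasure n (ENNReal.ofReal ((n : ℝ) ^ (-α)))
          {ω | ∃ k : ℕ, (k : ℝ) ≤ (n : ℝ) ^ (1 - β) ∧
            (n : ℝ) ^ β / 2 ≤ ({v : Fin n | isStarOfDegree n ω v k}.ncard : ℝ)}).toReal)
      Filter.atTop (nhds 1) := by
  set δ : ℝ := (α - 2 / 3) / 4 with hδ_def
  have hδ : 0 < δ := by linarith
  refine tendsto_toReal_measure_of_compl_le (fun _ => MeasurableSet.of_discrete)
    (u := fun n : ℕ => ENNReal.ofReal (2 * (n : ℝ) ^ (-δ))) ?_ ?_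
  · simpa using ENNReal.tendsto_ofReal
      (((tendsto_rpow_neg_atTop hδ).comp tendsto_natCast_atTop_atTop).const_mul 2)
  filter_upwards [eventually_floor_succ_mul_ceil_add_le (β := β) (by linarith) (by linarith) hδ,
    eventually_gt_atTop 0] with n hbudget hn
  set D := ⌊(n : ℝ) ^ (1 - β)⌋₊
  set T := ⌈(n : ℝ) ^ (1 - δ)⌉₊
  have hDT : (n : ℝ) ^ ((1 - β) + (1 - δ)) ≤ ((D + 1) * T : ℕ) := by
    rw [Real.rpow_add (by positivity)]
    push_cast
    exact mul_le_mul (Nat.lt_floor_add_one _).le (Nat.le_ceil _) (by positivity) (by positivity)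
  calc _ ≤ erMeasure n _ ({ω | (D + 1) * T ≤ #{e : Fin n × Fin n | (graphOf n ω).Adj e.1 e.2}}
        ∪ {ω | T ≤ #(graphOf n ω).orderedTriangles}) := by
        refine measure_mono fun ω hω => ?_
        by_contra hgood
        simp only [Set.mem_union, Set.mem_ofPred_eq, not_or, not_le] at hgood
        obtain ⟨k, hk, hstars⟩ := exists_le_ncard_isStarOfDegree ω D T _ hgood.1 hgood.2 hbudget
        exact hω ⟨k, (Nat.cast_le.mpr hk).trans (Nat.floor_le (by positivity)),
          (Nat.le_ceil _).trans (Nat.cast_le.mpr hstars)⟩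
    _ ≤ ENNReal.ofReal ((n : ℝ) ^ (-δ)) + ENNReal.ofReal ((n : ℝ) ^ (-δ)) := by
        refine (measure_union_le _ _).trans (add_le_add ?_ ?_)
        · exact erMeasure_rpow_card_adj_ge_le hn hDT (by linarith)
        · exact erMeasure_rpow_card_orderedTriangles_ge_le hn (Nat.le_ceil _) (by linarith)
    _ = ENNReal.ofReal (2 * (n : ℝ) ^ (-δ)) := by
        rw [← ENNReal.ofReal_add (by positivity) (by positivity), two_mul]
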